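/- For n ≥ 2, the Sobolev-Jacobi polynomial P̃_n^{(−1,−1)}(x) = C(2n−2,n)^{−1} ∑_{k=1}^{n−1} C(n−1,k) C(n−1,n−k) (x−1)^{n−k}(x+1)^k is an eigenfunction of the Jacobi differential operator with α = β = −1: (1−x²) P̃_n'' + 0·P̃_n' = −n(n−1) P̃_n, i.e. (1−x²)·(d²/dx²)P̃_n^{(−1,−1)}(x) = −n(n−1)·P̃_n^{(−1,−1)}(x) as an identity of polynomials. -/

import Mathlib

/-!
With `u = x - 1` and `v = x + 1` we have `1 - x² = -uv` and `u' = v' = 1`, so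
`uv (uⁱvʲ)'' = i(i-1) uⁱ⁻¹vʲ⁺¹ + 2ij uⁱvʲ + j(j-1) uⁱ⁺¹vʲ⁻¹`.
Up to the constant factor, `P̃_n = ∑_{i+j=n} C(n-1,i) C(n-1,j) uⁱvʲ`, and the identity
`(i+1) i C(n-1,i+1) C(n-1,j) = (j+1) j C(n-1,i) C(n-1,j+1)` for `i + j + 1 = n` lets the outer
two kinds of terms be re-indexed onto `uⁱvʲ` with weights `j(j-1)` and `i(i-1)`. Every monomial
thus acquires the factor `i(i-1) + 2ij + j(j-1) = n(n-1)`.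
-/

open Polynomial

/-- The Sobolev-Jacobi polynomial `P̃_n^{(−1,−1)}` for `n ≥ 2`. -/
noncomputable def sobolevJacobi (n : ℕ) : Polynomial ℝ :=
  Polynomial.C (((2 * n - 2).choose n : ℝ))⁻¹ *
    ∑ k ∈ Finset.Icc 1 (n - 1),
      Polynomial.C (((n - 1).choose k : ℝ) * ((n - 1).choose (n - k) : ℝ)) *
        (Polynomial.X - 1) ^ (n - k) * (Polynomial.X + 1) ^ k

open Finset

theorem Nat.add_choose_succ_mul_add_choose_mul (i j : ℕ) :
    (i + j).choose (i + 1) * (i + j).choose j * ((i + 1) * i) =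
      (i + j).choose i * (i + j).choose (j + 1) * ((j + 1) * j) := by
  have hi := Nat.choose_succ_right_eq (i + j) i
  have hj := Nat.choose_succ_right_eq (i + j) j
  rw [Nat.add_sub_cancel_left] at hi
  rw [Nat.add_sub_cancel] at hj
  calc (i + j).choose (i + 1) * (i + j).choose j * ((i + 1) * i)
      = (i + j).choose (i + 1) * (i + 1) * (i + j).choose j * i := by ring
    _ = (i + j).choose i * (i + j).choose (j + 1) * (j + 1) * j := by
      rw [hi, mul_assoc _ _ (j + 1), hj]; ring
    _ = (i + j).choose i * (i + j).choose (j + 1) * ((j + 1) * j) := by ring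

theorem Finset.Nat.sum_antidiagonal_eq_of_shift {M : Type*} [AddCommMonoid M] {n : ℕ}
    {f g : ℕ × ℕ → M} (hf : ∀ j, f (0, j) = 0) (hg : ∀ i, g (i, 0) = 0)
    (hfg : ∀ i j, i + j + 1 = n → f (i + 1, j) = g (i, j + 1)) :
    ∑ x ∈ antidiagonal n, f x = ∑ x ∈ antidiagonal n, g x := by
  cases n with
  | zero => simp [hf, hg]
  | succ m =>
    rw [Nat.sum_antidiagonal_succ, Nat.sum_antidiagonal_succ', hf, hg, zero_add, zero_add]
    exact sum_congr rfl fun x hx => hfg x.1 x.2 (by rw [mem_antidiagonal.mp hx])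

namespace Polynomial

variable {R : Type*} [CommRing R] {p q : R[X]}

theorem derivative_pow_of_derivative_eq_one (hp : derivative p = 1) (i : ℕ) :
    derivative (p ^ i) = i * p ^ (i - 1) := by
  rw [derivative_pow, hp, mul_one, C_eq_natCast]

theorem mul_derivative_pow_of_derivative_eq_one (hp : derivative p = 1) (i : ℕ) :
    p * derivative (p ^ i) = i * p ^ i := by
  rw [derivative_pow_of_derivative_eq_one hp]
  cases i with
  | zero => simp
  | succ i => rw [Nat.add_sub_cancel, pow_succ]; ring

theorem mul_derivative_derivative_pow_of_derivative_eq_one (hp : derivative p = 1) (i : ℕ) :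
    p * derivative (derivative (p ^ i)) = i * (i - 1) * p ^ (i - 1) := by
  have h := congrArg derivative (mul_derivative_pow_of_derivative_eq_one hp i)
  rw [derivative_mul, hp, one_mul, derivative_mul, derivative_natCast, zero_mul, zero_add] at h
  linear_combination h + ((i : R[X]) - 1) * derivative_pow_of_derivative_eq_one hp i

theorem mul_mul_derivative_derivative_pow_mul_pow (hp : derivative p = 1)
    (hq : derivative q = 1) (i j : ℕ) :
    p * q * derivative (derivative (p ^ i * q ^ j)) =
      i * (i - 1) * p ^ (i - 1) * q ^ (j + 1) + 2 * i * j * p ^ i * q ^ j +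
        j * (j - 1) * p ^ (i + 1) * q ^ (j - 1) := by
  have hp1 := mul_derivative_pow_of_derivative_eq_one hp i
  have hq1 := mul_derivative_pow_of_derivative_eq_one hq j
  have hp2 := mul_derivative_derivative_pow_of_derivative_eq_one hp i
  have hq2 := mul_derivative_derivative_pow_of_derivative_eq_one hq j
  simp only [derivative_mul, derivative_add]
  linear_combination q * q ^ j * hp2 + 2 * (q * derivative (q ^ j)) * hp1 +
    2 * i * p ^ i * hq1 + p * p ^ i * hq2

end Polynomial

section SobolevJacobiForm

variable {R : Type*} [CommRing R] {p q : R[X]}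

noncomputable def sobolevJacobiForm (p q : R[X]) (n : ℕ) : R[X] :=
  ∑ x ∈ antidiagonal n, ((n - 1).choose x.1 * (n - 1).choose x.2 : R[X]) * p ^ x.1 * q ^ x.2

theorem mul_mul_derivative_derivative_sobolevJacobiForm (hp : derivative p = 1)
    (hq : derivative q = 1) (n : ℕ) :
    p * q * derivative (derivative (sobolevJacobiForm p q n)) =
      n * (n - 1) * sobolevJacobiForm p q n := by
  set c : ℕ → ℕ → R[X] := fun i j => ((n - 1).choose i * (n - 1).choose j : R[X])
    with hc_def
  have hc : ∀ i j, i + j + 1 = n →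
      c (i + 1) j * ((i + 1) * i) = c i (j + 1) * ((j + 1) * j) := by
    rintro i j rfl
    simp only [hc_def, Nat.add_sub_cancel]
    have h := congrArg (Nat.cast : ℕ → R[X]) (Nat.add_choose_succ_mul_add_choose_mul i j)
    push_cast at h
    exact h
  have hup :
      ∑ x ∈ antidiagonal n, c x.1 x.2 * (x.1 * (x.1 - 1) * p ^ (x.1 - 1) * q ^ (x.2 + 1)) =
      ∑ x ∈ antidiagonal n, c x.1 x.2 * (x.2 * (x.2 - 1) * p ^ x.1 * q ^ x.2) := by
    apply Nat.sum_antidiagonal_eq_of_shift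
    · simp
    · simp
    intro i j hij
    push_cast
    linear_combination p ^ i * q ^ (j + 1) * hc i j hij
  have hdown :
      ∑ x ∈ antidiagonal n, c x.1 x.2 * (x.2 * (x.2 - 1) * p ^ (x.1 + 1) * q ^ (x.2 - 1)) =
      ∑ x ∈ antidiagonal n, c x.1 x.2 * (x.1 * (x.1 - 1) * p ^ x.1 * q ^ x.2) := by
    symm
    apply Nat.sum_antidiagonal_eq_of_shift
    · simp
    · simp
    intro i j hij
    push_cast
    linear_combination p ^ (i + 1) * q ^ j * hc i j hij
  calc p * q * derivative (derivative (sobolevJacobiForm p q n))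
      = ∑ x ∈ antidiagonal n,
          c x.1 x.2 * (p * q * derivative (derivative (p ^ x.1 * q ^ x.2))) := by
        simp only [sobolevJacobiForm, derivative_sum, mul_sum, mul_assoc, derivative_natCast_mul,
          hc_def]
        exact sum_congr rfl fun x _ => by ring
    _ = n * (n - 1) * sobolevJacobiForm p q n := by
        simp only [mul_mul_derivative_derivative_pow_mul_pow hp hq, mul_add, sum_add_distrib,
          hup, hdown]
        rw [sobolevJacobiForm, mul_sum, ← sum_add_distrib, ← sum_add_distrib]
        refine sum_congr rfl fun x hx => ?_
        have hx : (x.1 : R[X]) + x.2 = n := by rw [← Nat.cast_add, mem_antidiagonal.mp hx]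
        rw [← hx]
        ring

end SobolevJacobiForm

theorem sobolevJacobi_eq_C_mul_sobolevJacobiForm {n : ℕ} (hn : n ≠ 0) :
    sobolevJacobi n =
      C (((2 * n - 2).choose n : ℝ))⁻¹ * sobolevJacobiForm (X - 1) (X + 1) n := by
  have hvanish : ((n - 1).choose n : ℝ) = 0 := mod_cast Nat.choose_eq_zero_of_lt (by omega)
  rw [sobolevJacobi, sobolevJacobiForm, ← Nat.sum_antidiagonal_swap,
    Nat.sum_antidiagonal_eq_sum_range_succ_mk]
  refine congrArg (C _ * ·) ?_
  refine sum_subset (fun k hk => by simp only [mem_Icc] at hk; simp only [mem_range]; omega)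
    (fun k hk hk' => ?_) |>.trans (sum_congr rfl fun k _ => ?_)
  · obtain rfl | rfl : k = 0 ∨ k = n := by simp only [mem_range, mem_Icc] at hk hk'; omega
    all_goals simp [hvanish]
  · simp only [Prod.swap, map_mul, map_natCast]
    ring

/-- For `n ≥ 2`, the Sobolev-Jacobi polynomial `P̃_n^{(−1,−1)}` is an eigenfunction
of the Jacobi differential operator with `α = β = −1`:
`(1 − x²) P̃_n'' = −n(n−1) P̃_n` as an identity of polynomials. -/
theorem sobolevJacobi_eigenfunction (n : ℕ) (hn : 2 ≤ n) :
    (1 - Polynomial.X ^ 2) *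
        Polynomial.derivative (Polynomial.derivative (sobolevJacobi n)) =
      Polynomial.C (-(n : ℝ) * ((n : ℝ) - 1)) * (sobolevJacobi n) := by
  have key := mul_mul_derivative_derivative_sobolevJacobiForm (p := (X - 1 : ℝ[X])) (q := X + 1)
    (by simp) (by simp) n
  rw [sobolevJacobi_eq_C_mul_sobolevJacobiForm (by omega), derivative_C_mul, derivative_C_mul]
  simp only [map_mul, map_neg, map_sub, map_natCast, map_one]
  linear_combination (-C (((2 * n - 2).choose n : ℝ))⁻¹) * key
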